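/- arXiv:1503.03416 — 2 statements merged into one kernel-verified Lean document; each statement's English description precedes it below -/
import Mathlib

section
/- Let n₂(j) denote the maximum range over all bases of length j. If A = {a₀ < ⋯ < a_k} is a restricted basis (A+A = [0, 2a_k]), then for every 0 ≤ j ≤ k-1, a_j ≥ a_k - n₂(k-j-1) - 1. -/
/-! Reflect the elements of `A` above `a_j` through `a_k`: the set `{a_k - a_i : i > j}` has
`k - j` elements and contains `0`. Every `t < a_k - a_j` is covered by its sumset, because
`2 a_k - t = a_x + a_y` in `A + A`, and since both summands are at most `a_k`, each is at least
`a_k - t > a_j`. Hence `a_k - a_j - 1 ≤ n₂(k - j - 1)`. -/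

open Finset Pointwise

lemma card_image_tsub_of_forall_le {B : Finset ℕ} {M : ℕ} (hB : ∀ x ∈ B, x ≤ M) :
    #(B.image (M - ·)) = #B :=
  card_image_of_injOn fun x hx y hy hxy => by
    have := hB x hx; have := hB y hy; omega

lemma Icc_subset_add_image_tsub {A : Finset ℕ} {M b : ℕ} (hA : ∀ x ∈ A, x ≤ M) (hb : b < M)
    (hsum : Icc (M + b + 1) (2 * M) ⊆ A + A) :
    Icc 0 (M - b - 1) ⊆ (A.filter (b < ·)).image (M - ·) + (A.filter (b < ·)).image (M - ·) := by
  intro t ht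
  have htM : t + b + 1 ≤ M := by rw [mem_Icc] at ht; omega
  have h2M : 2 * M - t ∈ A + A := hsum (mem_Icc.2 ⟨by omega, by omega⟩)
  obtain ⟨x, hx, y, hy, hxy⟩ := mem_add.1 h2M
  have := hA x hx; have := hA y hy
  refine mem_add.2 ⟨M - x, ?_, M - y, ?_, by omega⟩
  · exact mem_image_of_mem _ (mem_filter.2 ⟨hx, by omega⟩)
  · exact mem_image_of_mem _ (mem_filter.2 ⟨hy, by omega⟩)

lemma card_filter_lt_image_of_strictMono {k : ℕ} {a : Fin (k + 1) → ℕ} (ha : StrictMono a)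
    (j : Fin (k + 1)) : #((univ.image a).filter (a j < ·)) = k - j := by
  have hfilter : univ.filter (fun i => a j < a i) = Ioi j := by
    ext i; simp [ha.lt_iff_lt]
  rw [filter_image, hfilter, card_image_of_injective _ ha.injective, Fin.card_Ioi]
  omega

theorem stmt_9 (N : ℕ → ℕ)
    (hN : ∀ j : ℕ, IsGreatest {m : ℕ | ∃ S : Finset ℕ, 0 ∈ S ∧ S.card = j + 1 ∧
      Finset.Icc 0 m ⊆ S + S} (N j))
    (k : ℕ) (a : Fin (k + 1) → ℕ) (ha : StrictMono a)
    (hres : Finset.image a Finset.univ + Finset.image a Finset.univ =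
      Finset.Icc 0 (2 * a (Fin.last k))) :
    ∀ j : Fin (k + 1), j.val + 1 ≤ k →
      (a (Fin.last k) : ℤ) - N (k - j.val - 1) - 1 ≤ (a j : ℤ) := by
  intro j hj
  set A := univ.image a
  set M := a (Fin.last k)
  have hA : ∀ x ∈ A, x ≤ M := by
    simpa [A] using fun i => ha.monotone (Fin.le_last i)
  have hjM : a j < M := ha (Fin.lt_def.2 (by simp; omega))
  have hcover := Icc_subset_add_image_tsub hA hjM
    (hres ▸ Icc_subset_Icc (Nat.zero_le _) le_rfl)
  have hzero : 0 ∈ (A.filter (a j < ·)).image (M - ·) :=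
    mem_image.2 ⟨M, mem_filter.2 ⟨mem_image_of_mem a (mem_univ _), hjM⟩, Nat.sub_self M⟩
  have hcard : #((A.filter (a j < ·)).image (M - ·)) = k - j - 1 + 1 := by
    rw [card_image_tsub_of_forall_le fun x hx => hA x (mem_filter.1 hx).1,
      card_filter_lt_image_of_strictMono ha]
    omega
  have hrange := (hN (k - j - 1)).2 ⟨_, hzero, hcard, hcover⟩
  omega
end

section
/- Let n₂(j) denote the maximum range over all bases of length j. If A = {a₀ < ⋯ < a_k} is a restricted basis, then for every 0 ≤ j ≤ k-2, the prefix A_j = {a₀,…,a_j} satisfies n₂(A_j) ≥ a_k - n₂(k-j-2) - 2. -/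
/-!
Let `n` be the range of the prefix `A_j`. Since `n + 1 ∉ A_j + A_j` but `n + 1 ∈ A + A`, one
summand lies beyond the prefix, so `a_{j+1} ≤ n + 1`. Now reflect: for `m ≤ a_k - n - 2`, write
`2 a_k - m = a_s + a_t`; both summands exceed `n + 1 ≥ a_{j+1}`, so `s, t ≥ j + 2` and
`m = (a_k - a_s) + (a_k - a_t)`. Hence `{a_k - a_i : i ≥ j + 2}`, a set of `k - j - 1` elements
containing `0`, has range at least `a_k - n - 2`, which is therefore at most `n₂(k - j - 2)`.
-/

open Finset Pointwise

theorem succ_notMem_of_isGreatest_Icc_subset {S : Finset ℕ} {n : ℕ}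
    (hn : IsGreatest {m : ℕ | Icc 0 m ⊆ S} n) : n + 1 ∉ S := by
  intro hS
  have hcover : Icc 0 (n + 1) ⊆ S := fun x hx => by
    rcases Nat.lt_or_ge x (n + 1) with hx' | hx'
    · exact hn.1 (mem_Icc.mpr ⟨x.zero_le, by omega⟩)
    · rwa [show x = n + 1 by simp at hx; omega]
  have := hn.2 hcover
  omega

section Restricted

variable {k : ℕ} {a : Fin (k + 1) → ℕ}

def reflectedSuffix (a : Fin (k + 1) → ℕ) (r : Fin (k + 1)) : Finset ℕ :=
  (Ici r).image fun i => a (Fin.last k) - a i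

theorem zero_mem_reflectedSuffix (r : Fin (k + 1)) : 0 ∈ reflectedSuffix a r :=
  mem_image.mpr ⟨Fin.last k, mem_Ici.mpr (Fin.le_last r), Nat.sub_self _⟩

theorem card_reflectedSuffix (ha : StrictMono a) (r : Fin (k + 1)) :
    (reflectedSuffix a r).card = k + 1 - r := by
  rw [reflectedSuffix, card_image_of_injective _ fun x y hxy => ?_, Fin.card_Ici]
  have hx := ha.monotone (Fin.le_last x)
  have hy := ha.monotone (Fin.le_last y)
  exact ha.injective (by omega)

theorem Icc_subset_reflectedSuffix_add (ha : StrictMono a)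
    (hres : image a univ + image a univ = Icc 0 (2 * a (Fin.last k)))
    {r : Fin (k + 1)} {M : ℕ} (hM : M ≤ 2 * a (Fin.last k))
    (hsmall : ∀ i < r, a i + M < a (Fin.last k)) :
    Icc 0 M ⊆ reflectedSuffix a r + reflectedSuffix a r := by
  intro m hm
  rw [mem_Icc] at hm
  have hmem : 2 * a (Fin.last k) - m ∈ image a univ + image a univ := by
    rw [hres, mem_Icc]; omega
  obtain ⟨x, hx, y, hy, hst⟩ := mem_add.mp hmem
  obtain ⟨s, -, rfl⟩ := mem_image.mp hx
  obtain ⟨t, -, rfl⟩ := mem_image.mp hy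
  have hs := ha.monotone (Fin.le_last s)
  have ht := ha.monotone (Fin.le_last t)
  have hrs : r ≤ s := not_lt.mp fun h => by have := hsmall s h; omega
  have hrt : r ≤ t := not_lt.mp fun h => by have := hsmall t h; omega
  exact mem_add.mpr ⟨a (Fin.last k) - a s, mem_image.mpr ⟨s, mem_Ici.mpr hrs, rfl⟩,
    a (Fin.last k) - a t, mem_image.mpr ⟨t, mem_Ici.mpr hrt, rfl⟩, by omega⟩

theorem le_range_prefix_succ (ha : StrictMono a)
    (hres : image a univ + image a univ = Icc 0 (2 * a (Fin.last k)))
    {j : Fin (k + 1)} (hj : j.val + 1 ≤ k) {n : ℕ}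
    (hn : IsGreatest {m : ℕ | Icc 0 m ⊆
      image a (univ.filter (· ≤ j)) + image a (univ.filter (· ≤ j))} n) :
    a ⟨j + 1, by omega⟩ ≤ n + 1 := by
  have hlast := ha.monotone (Fin.le_last ⟨j + 1, by omega⟩)
  by_cases hn' : 2 * a (Fin.last k) < n + 1
  · omega
  have hmem : n + 1 ∈ image a univ + image a univ := by rw [hres, mem_Icc]; omega
  obtain ⟨x, hx, y, hy, hpq⟩ := mem_add.mp hmem
  obtain ⟨p, -, rfl⟩ := mem_image.mp hx
  obtain ⟨q, -, rfl⟩ := mem_image.mp hy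
  have hbeyond : j < p ∨ j < q := by
    by_contra! h
    exact succ_notMem_of_isGreatest_Icc_subset hn (mem_add.mpr
      ⟨_, mem_image_of_mem _ (by simpa using h.1), _, mem_image_of_mem _ (by simpa using h.2),
        hpq⟩)
  have hle : ∀ i, j < i → a ⟨j + 1, by omega⟩ ≤ a i := fun i hi =>
    ha.monotone (Fin.le_def.mpr hi)
  rcases hbeyond with h | h
  · have := hle p h; omega
  · have := hle q h; omega

end Restricted

theorem stmt_10 (N : ℕ → ℕ)
    (hN : ∀ j : ℕ, IsGreatest {m : ℕ | ∃ S : Finset ℕ, 0 ∈ S ∧ S.card = j + 1 ∧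
      Finset.Icc 0 m ⊆ S + S} (N j))
    (k : ℕ) (a : Fin (k + 1) → ℕ) (ha : StrictMono a)
    (hres : Finset.image a Finset.univ + Finset.image a Finset.univ =
      Finset.Icc 0 (2 * a (Fin.last k))) :
    ∀ j : Fin (k + 1), j.val + 2 ≤ k → ∀ nj : ℕ,
      IsGreatest {m : ℕ | Finset.Icc 0 m ⊆
        Finset.image a (Finset.univ.filter (· ≤ j)) +
          Finset.image a (Finset.univ.filter (· ≤ j))} nj →
      (a (Fin.last k) : ℤ) - N (k - j.val - 2) - 2 ≤ (nj : ℤ) := by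
  intro j hj nj hnj
  have hnext := le_range_prefix_succ ha hres (by omega) hnj
  by_cases hshort : a (Fin.last k) ≤ nj + 2
  · omega
  let r : Fin (k + 1) := ⟨j + 2, by omega⟩
  have hsmall : ∀ i < r, a i + (a (Fin.last k) - nj - 2) < a (Fin.last k) := fun i hi => by
    have hi' : i ≤ ⟨j + 1, by omega⟩ := Fin.le_def.mpr (Nat.le_of_lt_succ hi)
    have := ha.monotone hi'
    omega
  have hcard : (reflectedSuffix a r).card = k - j - 2 + 1 := by
    rw [card_reflectedSuffix ha]; simp only [r]; omega
  have hcover := Icc_subset_reflectedSuffix_add ha hres (by omega) hsmall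
  have := (hN _).2 ⟨_, zero_mem_reflectedSuffix r, hcard, hcover⟩
  omega
end
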